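/- arXiv:2601.18365 — 10 statements merged into one kernel-verified Lean document; each statement's English description precedes it below -/
import Mathlib

section
/- Let Δ, δ be real numbers with Δ ≥ δ ≥ 1 and let α ≥ 0. Then α(Δ+δ) + √(α²(Δ−δ)² + 4Δ(1−α)²) ≥ α(Δ+1) + √(α²(Δ+1)² + 4Δ(1−2α)). -/
lemma aux_sqrt (a b C : ℝ) (ha : 0 ≤ a) (hab : a ≤ b) (hC : 0 ≤ C) :
    Real.sqrt (b ^ 2 + C) ≤ (b - a) + Real.sqrt (a ^ 2 + C) := by
  have hs : 0 ≤ Real.sqrt (a ^ 2 + C) := Real.sqrt_nonneg _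
  have hsq : Real.sqrt (a ^ 2 + C) ^ 2 = a ^ 2 + C := by
    rw [Real.sq_sqrt]; positivity
  have hale : a ≤ Real.sqrt (a ^ 2 + C) := by
    nlinarith [Real.sqrt_nonneg (a ^ 2 + C)]
  have hX : 0 ≤ (b - a) + Real.sqrt (a ^ 2 + C) := by linarith
  have : b ^ 2 + C ≤ ((b - a) + Real.sqrt (a ^ 2 + C)) ^ 2 := by nlinarith
  calc Real.sqrt (b ^ 2 + C) ≤ Real.sqrt (((b - a) + Real.sqrt (a ^ 2 + C)) ^ 2) :=
        Real.sqrt_le_sqrt this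
    _ = (b - a) + Real.sqrt (a ^ 2 + C) := Real.sqrt_sq hX

theorem stmt_0 (Δ δ α : ℝ) (h1 : Δ ≥ δ) (h2 : δ ≥ 1) (hα : α ≥ 0) :
    α * (Δ + δ) + Real.sqrt (α ^ 2 * (Δ - δ) ^ 2 + 4 * Δ * (1 - α) ^ 2) ≥
      α * (Δ + 1) + Real.sqrt (α ^ 2 * (Δ + 1) ^ 2 + 4 * Δ * (1 - 2 * α)) := by
  have hΔ : (1:ℝ) ≤ Δ := le_trans h2 h1
  have hrw : α ^ 2 * (Δ + 1) ^ 2 + 4 * Δ * (1 - 2 * α)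
      = (α * (Δ - 1)) ^ 2 + 4 * Δ * (1 - α) ^ 2 := by ring
  have hrw2 : α ^ 2 * (Δ - δ) ^ 2 + 4 * Δ * (1 - α) ^ 2
      = (α * (Δ - δ)) ^ 2 + 4 * Δ * (1 - α) ^ 2 := by ring
  rw [hrw, hrw2]
  have key := aux_sqrt (α * (Δ - δ)) (α * (Δ - 1)) (4 * Δ * (1 - α) ^ 2)
    (by nlinarith) (by nlinarith) (by positivity)
  nlinarith [key]
end

section
/- Let Δ, δ be real numbers with Δ ≥ δ ≥ 1 and α ≥ 0. Then α(Δ+δ) + √(α²(Δ−δ)² + 4Δ(1−α)²) = α(Δ+1) + √(α²(Δ+1)² + 4Δ(1−2α)) if and only if δ = 1 or α = 0 or α = 1. -/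
/-! With `x = α(Δ - δ)`, `y = α(δ - 1)` and `c = 4Δ(1 - α)²`, the two radicands are `x² + c` and
`(x + y)² + c`, so the equation reads `y + √(x² + c) = √((x + y)² + c)`. Squaring turns it into
`y (√(x² + c) - x) = 0`, and `√(x² + c) = x` forces `c = 0`. -/

lemma add_sqrt_sq_add_eq_sqrt_iff {x y c : ℝ} (hx : 0 ≤ x) (hy : 0 ≤ y) (hc : 0 ≤ c) :
    y + √(x ^ 2 + c) = √((x + y) ^ 2 + c) ↔ y = 0 ∨ c = 0 := by
  have hsq : √(x ^ 2 + c) ^ 2 = x ^ 2 + c := Real.sq_sqrt (by positivity)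
  have hsqrt_eq : √(x ^ 2 + c) = x ↔ c = 0 := by
    rw [Real.sqrt_eq_iff_eq_sq (by positivity) hx]
    constructor <;> intro h <;> linarith
  rw [eq_comm, Real.sqrt_eq_iff_eq_sq (by positivity) (by positivity), ← hsqrt_eq,
    ← sub_eq_zero (b := x), ← mul_eq_zero]
  constructor
  · intro h; linear_combination -(h + hsq) / 2
  · intro h; linear_combination -2 * h - hsq

theorem stmt_2 (Δ δ α : ℝ) (h1 : Δ ≥ δ) (h2 : δ ≥ 1) (hα : α ≥ 0) :
    α * (Δ + δ) + Real.sqrt (α ^ 2 * (Δ - δ) ^ 2 + 4 * Δ * (1 - α) ^ 2) =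
      α * (Δ + 1) + Real.sqrt (α ^ 2 * (Δ + 1) ^ 2 + 4 * Δ * (1 - 2 * α)) ↔
    δ = 1 ∨ α = 0 ∨ α = 1 := by
  have hΔ : 0 < Δ := by linarith
  set c := 4 * Δ * (1 - α) ^ 2
  have hradicand : α ^ 2 * (Δ + 1) ^ 2 + 4 * Δ * (1 - 2 * α) =
      (α * (Δ - δ) + α * (δ - 1)) ^ 2 + c := by ring
  calc _ ↔ α * (δ - 1) + √((α * (Δ - δ)) ^ 2 + c) = √((α * (Δ - δ) + α * (δ - 1)) ^ 2 + c) := by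
        rw [hradicand, mul_pow]
        constructor <;> intro h <;> linarith
    _ ↔ α * (δ - 1) = 0 ∨ c = 0 :=
        add_sqrt_sq_add_eq_sqrt_iff (mul_nonneg hα (sub_nonneg.2 h1))
          (mul_nonneg hα (sub_nonneg.2 h2)) (by positivity)
    _ ↔ _ := by
      simp only [c, mul_eq_zero, sub_eq_zero, OfNat.ofNat_ne_zero, hΔ.ne', or_self, ne_eq,
        not_false_eq_true, pow_eq_zero_iff, eq_comm (a := (1 : ℝ)), false_or]
      tauto
end

section
/- Let Δ ≥ 0 be a real number and α ≥ 0. Then αΔ + √(α²Δ² + 4Δ(1−α)²) = α(Δ+1) + √(α²(Δ+1)² + 4Δ(1−2α)) if and only if α = 0, or (α = 1 and Δ ≥ 1). -/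
theorem stmt_4 (Δ α : ℝ) (hΔ : Δ ≥ 0) (hα : α ≥ 0) :
    α * Δ + Real.sqrt (α ^ 2 * Δ ^ 2 + 4 * Δ * (1 - α) ^ 2) =
      α * (Δ + 1) + Real.sqrt (α ^ 2 * (Δ + 1) ^ 2 + 4 * Δ * (1 - 2 * α)) ↔
    α = 0 ∨ (α = 1 ∧ Δ ≥ 1) := by
  constructor
  · intro h
    set B := α ^ 2 * (Δ + 1) ^ 2 + 4 * Δ * (1 - 2 * α) with hBdef
    have hBalt : B = α ^ 2 * (Δ - 1) ^ 2 + 4 * Δ * (1 - α) ^ 2 := by rw [hBdef]; ring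
    have hB : 0 ≤ B := by rw [hBalt]; positivity
    have hA : 0 ≤ α ^ 2 * Δ ^ 2 + 4 * Δ * (1 - α) ^ 2 := by positivity
    have hsB : Real.sqrt B ^ 2 = B := Real.sq_sqrt hB
    have h1 : Real.sqrt (α ^ 2 * Δ ^ 2 + 4 * Δ * (1 - α) ^ 2) = α + Real.sqrt B := by
      linarith
    have h2 : α ^ 2 * Δ ^ 2 + 4 * Δ * (1 - α) ^ 2 = (α + Real.sqrt B) ^ 2 := by
      rw [← h1, Real.sq_sqrt hA]
    by_cases hα0 : α = 0
    · exact Or.inl hα0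
    · right
      have hαpos : 0 < α := lt_of_le_of_ne hα (Ne.symm hα0)
      have h3 : 2 * α * (α * (Δ - 1) - Real.sqrt B) = 0 := by nlinarith [hsB, h2]
      have h5 : α * (Δ - 1) = Real.sqrt B := by
        rcases mul_eq_zero.mp h3 with h | h
        · exact absurd (by linarith : α = 0) hα0
        · linarith
      have hΔ1 : Δ ≥ 1 := by
        have := Real.sqrt_nonneg B
        nlinarith [h5]
      have h6 : α ^ 2 * (Δ - 1) ^ 2 = B := by nlinarith [hsB, h5]
      have h7 : 4 * Δ * (1 - α) ^ 2 = 0 := by linarith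
      have h8 : (1 - α) ^ 2 = 0 := by nlinarith [sq_nonneg (1 - α)]
      have : α = 1 := by have := sq_eq_zero_iff.mp h8; linarith
      exact ⟨this, hΔ1⟩
  · rintro (rfl | ⟨rfl, hΔ1⟩)
    · norm_num
    · have e1 : (1:ℝ) ^ 2 * Δ ^ 2 + 4 * Δ * (1 - 1) ^ 2 = Δ ^ 2 := by ring
      have e2 : (1:ℝ) ^ 2 * (Δ + 1) ^ 2 + 4 * Δ * (1 - 2 * 1) = (Δ - 1) ^ 2 := by ring
      rw [e1, e2, Real.sqrt_sq hΔ, Real.sqrt_sq (by linarith)]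
      ring
end

section
/- Define f(δ,Δ,α) = (1/2)(α(Δ+δ) + √(α²(Δ−δ)² + 4Δ(1−α)²)) and g(Δ,α) = (1/2)(α(Δ+1) + √(α²(Δ+1)² + 4Δ(1−2α))), where α ≥ 0 is real and Δ ≥ δ are nonnegative integers. Then f(δ,Δ,α) > g(Δ,α) if and only if δ ≥ 2 and α ∉ {0,1}. -/
noncomputable def f (δ Δ : ℕ) (α : ℝ) : ℝ :=
  (1 / 2) * (α * ((Δ : ℝ) + δ) +
    Real.sqrt (α ^ 2 * ((Δ : ℝ) - δ) ^ 2 + 4 * Δ * (1 - α) ^ 2))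

noncomputable def g (Δ : ℕ) (α : ℝ) : ℝ :=
  (1 / 2) * (α * ((Δ : ℝ) + 1) +
    Real.sqrt (α ^ 2 * ((Δ : ℝ) + 1) ^ 2 + 4 * Δ * (1 - 2 * α)))

lemma sqrt_le_key (α c x y : ℝ) (hα : 0 ≤ α) (hc : 0 ≤ c) (hy : 0 ≤ y) (hxy : y ≤ x) :
    Real.sqrt (α ^ 2 * x ^ 2 + c) ≤ α * (x - y) + Real.sqrt (α ^ 2 * y ^ 2 + c) := by
  set S := Real.sqrt (α ^ 2 * y ^ 2 + c) with hS
  have hSn : 0 ≤ S := Real.sqrt_nonneg _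
  have hsq : S ^ 2 = α ^ 2 * y ^ 2 + c := Real.sq_sqrt (by positivity)
  have h1 : α * y ≤ S := by
    rw [hS, show α ^ 2 * y ^ 2 + c = (α*y)^2 + c by ring]
    calc α * y = Real.sqrt ((α*y)^2) := (Real.sqrt_sq (by positivity)).symm
    _ ≤ _ := Real.sqrt_le_sqrt (by linarith)
  have hB : 0 ≤ α * (x - y) + S := by nlinarith
  calc Real.sqrt (α ^ 2 * x ^ 2 + c) ≤ Real.sqrt ((α * (x - y) + S) ^ 2) := by
        apply Real.sqrt_le_sqrt
        nlinarith [mul_le_mul_of_nonneg_left h1 (by nlinarith : (0:ℝ) ≤ 2 * (α * (x - y)))]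
    _ = α * (x - y) + S := Real.sqrt_sq hB

lemma sqrt_lt_key (α c x y : ℝ) (hα : 0 < α) (hc : 0 < c) (hy : 0 ≤ y) (hxy : y < x) :
    Real.sqrt (α ^ 2 * x ^ 2 + c) < α * (x - y) + Real.sqrt (α ^ 2 * y ^ 2 + c) := by
  set S := Real.sqrt (α ^ 2 * y ^ 2 + c) with hS
  have hSn : 0 ≤ S := Real.sqrt_nonneg _
  have hsq : S ^ 2 = α ^ 2 * y ^ 2 + c := Real.sq_sqrt (by positivity)
  have h1 : α * y < S := by
    nlinarith [mul_nonneg hα.le hy]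
  have hB : 0 < α * (x - y) + S := by nlinarith
  have : α ^ 2 * x ^ 2 + c < (α * (x - y) + S) ^ 2 := by
    nlinarith [mul_lt_mul_of_pos_left h1 (by nlinarith : (0:ℝ) < 2 * (α * (x - y)))]
  calc Real.sqrt (α ^ 2 * x ^ 2 + c) < Real.sqrt ((α * (x - y) + S) ^ 2) := by
        apply Real.sqrt_lt_sqrt (by positivity) this
    _ = α * (x - y) + S := Real.sqrt_sq hB.le

lemma g_eq_f1 (Δ : ℕ) (α : ℝ) : g Δ α = f 1 Δ α := by
  unfold f g
  push_cast
  rw [show α ^ 2 * ((Δ : ℝ) + 1) ^ 2 + 4 * Δ * (1 - 2 * α)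
      = α ^ 2 * ((Δ : ℝ) - 1) ^ 2 + 4 * Δ * (1 - α) ^ 2 by ring]

theorem stmt_5 (δ Δ : ℕ) (α : ℝ) (h : δ ≤ Δ) (hα : 0 ≤ α) :
    f δ Δ α > g Δ α ↔ 2 ≤ δ ∧ α ≠ 0 ∧ α ≠ 1 := by
  have hΔδ : (δ : ℝ) ≤ (Δ : ℝ) := Nat.cast_le.mpr h
  constructor
  · intro hgt
    by_contra hcon
    -- show f ≤ g in each degenerate case
    have hle : f δ Δ α ≤ g Δ α := by
      rw [g_eq_f1]
      by_cases h0 : α = 0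
      · subst h0
        unfold f
        push_cast
        have e1 : (0:ℝ) ^ 2 * ((Δ : ℝ) - δ) ^ 2 + 4 * Δ * (1 - 0) ^ 2 = 4 * Δ := by ring
        have e2 : (0:ℝ) ^ 2 * ((Δ : ℝ) - 1) ^ 2 + 4 * Δ * (1 - 0) ^ 2 = 4 * Δ := by ring
        rw [e1, e2]; ring_nf; rfl
      by_cases h1 : α = 1
      · subst h1
        unfold f
        push_cast
        have e1 : (1:ℝ) ^ 2 * ((Δ : ℝ) - δ) ^ 2 + 4 * Δ * (1 - 1) ^ 2 = ((Δ : ℝ) - δ) ^ 2 := by ring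
        have e2 : (1:ℝ) ^ 2 * ((Δ : ℝ) - 1) ^ 2 + 4 * Δ * (1 - 1) ^ 2 = ((Δ : ℝ) - 1) ^ 2 := by ring
        rw [e1, e2, Real.sqrt_sq (by linarith), Real.sqrt_sq_eq_abs]
        have := le_abs_self ((Δ : ℝ) - 1)
        linarith
      -- now δ ≤ 1
      have hδ1 : δ ≤ 1 := by
        rcases Nat.lt_or_ge δ 2 with hd | hd
        · omega
        · exact absurd ⟨hd, h0, h1⟩ hcon
      interval_cases δ
      · -- δ = 0
        rcases Nat.eq_zero_or_pos Δ with hΔ | hΔ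
        · subst hΔ
          unfold f
          norm_num
          positivity
        · have hΔ1 : (1:ℝ) ≤ (Δ:ℝ) := by exact_mod_cast hΔ
          have key := sqrt_le_key α (4 * Δ * (1 - α) ^ 2) (Δ : ℝ) ((Δ:ℝ) - 1) hα
            (by positivity) (by linarith) (by linarith)
          unfold f
          push_cast
          have e : ((Δ:ℝ) - ((Δ:ℝ) - 1)) = 1 := by ring
          rw [e] at key
          have e0 : ((Δ:ℝ) - 0) = (Δ:ℝ) := by ring
          rw [e0]
          linarith
      · exact le_refl _
    exact absurd hgt (not_lt.mpr hle)
  · rintro ⟨hδ2, h0, h1⟩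
    have hδ2' : (2:ℝ) ≤ (δ:ℝ) := by exact_mod_cast hδ2
    have hΔ2 : (2:ℝ) ≤ (Δ:ℝ) := by linarith
    have hαpos : 0 < α := lt_of_le_of_ne hα (Ne.symm h0)
    have hcpos : 0 < 4 * (Δ:ℝ) * (1 - α) ^ 2 := by
      have : (1 - α) ≠ 0 := fun hh => h1 (by linarith)
      positivity
    have key := sqrt_lt_key α (4 * Δ * (1 - α) ^ 2) ((Δ:ℝ) - 1) ((Δ:ℝ) - δ) hαpos
      hcpos (by linarith) (by linarith)
    rw [g_eq_f1]
    unfold f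
    push_cast
    have e : (((Δ:ℝ) - 1) - ((Δ:ℝ) - δ)) = (δ:ℝ) - 1 := by ring
    rw [e] at key
    nlinarith
end

section
/- Define f(δ,Δ,α) = (1/2)(α(Δ+δ) + √(α²(Δ−δ)² + 4Δ(1−α)²)) and g(Δ,α) = (1/2)(α(Δ+1) + √(α²(Δ+1)² + 4Δ(1−2α))), where α ≥ 0 is real and Δ ≥ δ are nonnegative integers. Then f(δ,Δ,α) < g(Δ,α) if and only if (δ = 0 and α ∉ {0,1}) or (Δ = 0 and α ≠ 0). -/
lemma key_le (a b c : ℝ) (hb : 0 ≤ b) (hba : b ≤ a) (hc : 0 ≤ c) :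
    Real.sqrt (a + c) + Real.sqrt b ≤ Real.sqrt (b + c) + Real.sqrt a := by
  have ha : 0 ≤ a := hb.trans hba
  have h1 : Real.sqrt ((a + c) * b) ≤ Real.sqrt (a * (b + c)) :=
    Real.sqrt_le_sqrt (by nlinarith)
  rw [Real.sqrt_mul (by linarith), Real.sqrt_mul ha] at h1
  have h2 := Real.sq_sqrt (show (0:ℝ) ≤ a + c by linarith)
  have h3 := Real.sq_sqrt (show (0:ℝ) ≤ b + c by linarith)
  have h4 := Real.sq_sqrt ha
  have h5 := Real.sq_sqrt hb
  have n1 := Real.sqrt_nonneg (a + c)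
  have n2 := Real.sqrt_nonneg (b + c)
  have n3 := Real.sqrt_nonneg a
  have n4 := Real.sqrt_nonneg b
  have hsq : (Real.sqrt (a + c) + Real.sqrt b) ^ 2 ≤ (Real.sqrt (b + c) + Real.sqrt a) ^ 2 := by
    nlinarith
  calc Real.sqrt (a + c) + Real.sqrt b
      = Real.sqrt ((Real.sqrt (a + c) + Real.sqrt b) ^ 2) :=
        (Real.sqrt_sq (by linarith)).symm
    _ ≤ Real.sqrt ((Real.sqrt (b + c) + Real.sqrt a) ^ 2) := Real.sqrt_le_sqrt hsq
    _ = Real.sqrt (b + c) + Real.sqrt a := Real.sqrt_sq (by linarith)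

lemma key_lt (a b c : ℝ) (hb : 0 ≤ b) (hba : b < a) (hc : 0 < c) :
    Real.sqrt (a + c) + Real.sqrt b < Real.sqrt (b + c) + Real.sqrt a := by
  have ha : 0 ≤ a := hb.trans hba.le
  have h1 : Real.sqrt ((a + c) * b) < Real.sqrt (a * (b + c)) := by
    apply Real.sqrt_lt_sqrt (by nlinarith)
    nlinarith
  rw [Real.sqrt_mul (by linarith), Real.sqrt_mul ha] at h1
  have h2 := Real.sq_sqrt (show (0:ℝ) ≤ a + c by linarith)
  have h3 := Real.sq_sqrt (show (0:ℝ) ≤ b + c by linarith)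
  have h4 := Real.sq_sqrt ha
  have h5 := Real.sq_sqrt hb
  have n1 := Real.sqrt_nonneg (a + c)
  have n2 := Real.sqrt_nonneg (b + c)
  have n3 := Real.sqrt_nonneg a
  have n4 := Real.sqrt_nonneg b
  have hsq : (Real.sqrt (a + c) + Real.sqrt b) ^ 2 < (Real.sqrt (b + c) + Real.sqrt a) ^ 2 := by
    nlinarith
  calc Real.sqrt (a + c) + Real.sqrt b
      = Real.sqrt ((Real.sqrt (a + c) + Real.sqrt b) ^ 2) :=
        (Real.sqrt_sq (by linarith)).symm
    _ < Real.sqrt ((Real.sqrt (b + c) + Real.sqrt a) ^ 2) :=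
        Real.sqrt_lt_sqrt (by positivity) hsq
    _ = Real.sqrt (b + c) + Real.sqrt a := Real.sqrt_sq (by linarith)

lemma g_eq (Δ : ℕ) (α : ℝ) :
    g Δ α = (1 / 2) * (α * ((Δ : ℝ) + 1) +
      Real.sqrt (α ^ 2 * ((Δ : ℝ) - 1) ^ 2 + 4 * Δ * (1 - α) ^ 2)) := by
  unfold g
  rw [show α ^ 2 * ((Δ:ℝ) + 1) ^ 2 + 4 * Δ * (1 - 2 * α)
    = α ^ 2 * ((Δ:ℝ) - 1) ^ 2 + 4 * Δ * (1 - α) ^ 2 from by ring]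

theorem stmt_7 (δ Δ : ℕ) (α : ℝ) (h : δ ≤ Δ) (hα : 0 ≤ α) :
    f δ Δ α < g Δ α ↔ (δ = 0 ∧ α ≠ 0 ∧ α ≠ 1) ∨ (Δ = 0 ∧ α ≠ 0) := by
  rcases Nat.eq_zero_or_pos Δ with hΔ | hΔ
  · -- Δ = 0, hence δ = 0
    subst hΔ
    have hδ0 : δ = 0 := Nat.le_zero.mp h
    subst hδ0
    have hf : f 0 0 α = 0 := by simp [f]
    have hg : g 0 α = α := by
      have e : α ^ 2 * (((0:ℕ):ℝ) + 1) ^ 2 + 4 * ((0:ℕ):ℝ) * (1 - 2 * α) = α ^ 2 := by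
        push_cast; ring
      rw [g, e, Real.sqrt_sq hα]
      push_cast; ring
    rw [hf, hg]
    constructor
    · intro hlt
      right
      exact ⟨rfl, by positivity⟩
    · rintro (⟨-, h0, -⟩ | ⟨-, h0⟩) <;> exact lt_of_le_of_ne hα (Ne.symm h0)
  · -- Δ ≥ 1
    have hD : (1:ℝ) ≤ (Δ:ℝ) := by exact_mod_cast hΔ
    have hΔ0 : Δ ≠ 0 := hΔ.ne'
    have s1 : Real.sqrt (α ^ 2 * ((Δ:ℝ) - 1) ^ 2) = α * ((Δ:ℝ) - 1) := by
      rw [show α ^ 2 * ((Δ:ℝ) - 1) ^ 2 = (α * ((Δ:ℝ) - 1)) ^ 2 by ring]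
      exact Real.sqrt_sq (mul_nonneg hα (by linarith))
    rcases Nat.eq_zero_or_pos δ with hδ | hδ
    · subst hδ
      simp only [hΔ0, false_and, or_false, true_and]
      constructor
      · intro hlt
        constructor
        · rintro rfl
          apply absurd hlt
          rw [f, g_eq]
          push_cast
          norm_num
        · rintro rfl
          apply absurd hlt
          rw [f, g_eq]
          have e1 : (1:ℝ) ^ 2 * ((Δ:ℝ) - ((0:ℕ):ℝ)) ^ 2 + 4 * (Δ:ℝ) * (1 - 1) ^ 2
              = (Δ:ℝ) ^ 2 := by push_cast; ring
          have e2 : (1:ℝ) ^ 2 * ((Δ:ℝ) - 1) ^ 2 + 4 * (Δ:ℝ) * (1 - 1) ^ 2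
              = ((Δ:ℝ) - 1) ^ 2 := by ring
          rw [e1, e2, Real.sqrt_sq (by linarith), Real.sqrt_sq (by linarith)]
          push_cast
          norm_num
      · rintro ⟨h0, h1⟩
        have hαpos : 0 < α := lt_of_le_of_ne hα (Ne.symm h0)
        have h1' : (1:ℝ) - α ≠ 0 := sub_ne_zero.2 (Ne.symm h1)
        have hsq1 : 0 < (1 - α) ^ 2 := by
          rcases h1'.lt_or_gt with hlt | hlt <;> nlinarith
        have hc : 0 < 4 * (Δ:ℝ) * (1 - α) ^ 2 := by
          apply mul_pos (by linarith) hsq1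
        have hb : 0 ≤ α ^ 2 * ((Δ:ℝ) - 1) ^ 2 := by positivity
        have hba : α ^ 2 * ((Δ:ℝ) - 1) ^ 2 < α ^ 2 * (Δ:ℝ) ^ 2 := by nlinarith
        have key := key_lt (α ^ 2 * (Δ:ℝ) ^ 2) (α ^ 2 * ((Δ:ℝ) - 1) ^ 2)
          (4 * (Δ:ℝ) * (1 - α) ^ 2) hb hba hc
        have s0 : Real.sqrt (α ^ 2 * (Δ:ℝ) ^ 2) = α * (Δ:ℝ) := by
          rw [show α ^ 2 * (Δ:ℝ) ^ 2 = (α * (Δ:ℝ)) ^ 2 by ring]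
          exact Real.sqrt_sq (mul_nonneg hα (by linarith))
        rw [s0, s1] at key
        rw [f, g_eq]
        have e1 : Real.sqrt (α ^ 2 * ((Δ:ℝ) - ((0:ℕ):ℝ)) ^ 2 + 4 * (Δ:ℝ) * (1 - α) ^ 2)
            = Real.sqrt (α ^ 2 * (Δ:ℝ) ^ 2 + 4 * (Δ:ℝ) * (1 - α) ^ 2) := by
          congr 1; push_cast; ring
        rw [e1]
        push_cast
        linarith
    · -- δ ≥ 1 : no strict inequality
      have hδ0 : δ ≠ 0 := hδ.ne'
      have hd1 : (1:ℝ) ≤ (δ:ℝ) := by exact_mod_cast hδ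
      have hdD : (δ:ℝ) ≤ (Δ:ℝ) := by exact_mod_cast h
      simp only [hδ0, hΔ0, false_and, or_self, iff_false, not_lt]
      have hb : 0 ≤ α ^ 2 * ((Δ:ℝ) - (δ:ℝ)) ^ 2 := by positivity
      have hba : α ^ 2 * ((Δ:ℝ) - (δ:ℝ)) ^ 2 ≤ α ^ 2 * ((Δ:ℝ) - 1) ^ 2 := by
        nlinarith [mul_nonneg (by linarith : (0:ℝ) ≤ (δ:ℝ) - 1)
          (by linarith : (0:ℝ) ≤ 2 * (Δ:ℝ) - (δ:ℝ) - 1), sq_nonneg α]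
      have key := key_le (α ^ 2 * ((Δ:ℝ) - 1) ^ 2) (α ^ 2 * ((Δ:ℝ) - (δ:ℝ)) ^ 2)
        (4 * (Δ:ℝ) * (1 - α) ^ 2) hb hba (by positivity)
      have s2 : Real.sqrt (α ^ 2 * ((Δ:ℝ) - (δ:ℝ)) ^ 2) = α * ((Δ:ℝ) - (δ:ℝ)) := by
        rw [show α ^ 2 * ((Δ:ℝ) - (δ:ℝ)) ^ 2 = (α * ((Δ:ℝ) - (δ:ℝ))) ^ 2 by ring]
        exact Real.sqrt_sq (mul_nonneg hα (by linarith))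
      rw [s1, s2] at key
      rw [f, g_eq]
      linarith
end

section
/- Let Δ ≥ δ ≥ 1 be real numbers and α ≥ 0. Then α(δ−1) + √(α²(Δ−δ)² + 4Δ(1−α)²) ≥ √(α²(Δ−1)² + 4Δ(1−α)²). -/
theorem stmt_9 (Δ δ α : ℝ) (h1 : Δ ≥ δ) (h2 : δ ≥ 1) (hα : α ≥ 0) :
    α * (δ - 1) + Real.sqrt (α ^ 2 * (Δ - δ) ^ 2 + 4 * Δ * (1 - α) ^ 2) ≥
      Real.sqrt (α ^ 2 * (Δ - 1) ^ 2 + 4 * Δ * (1 - α) ^ 2) := by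
  have hΔ : (0:ℝ) ≤ Δ := by linarith
  have hA : (0:ℝ) ≤ α ^ 2 * (Δ - δ) ^ 2 + 4 * Δ * (1 - α) ^ 2 := by positivity
  have hB : (0:ℝ) ≤ α ^ 2 * (Δ - 1) ^ 2 + 4 * Δ * (1 - α) ^ 2 := by positivity
  set S := Real.sqrt (α ^ 2 * (Δ - δ) ^ 2 + 4 * Δ * (1 - α) ^ 2) with hSdef
  have hSnn : 0 ≤ S := Real.sqrt_nonneg _
  have hSsq : S ^ 2 = α ^ 2 * (Δ - δ) ^ 2 + 4 * Δ * (1 - α) ^ 2 := Real.sq_sqrt hA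
  have hS : α * (Δ - δ) ≤ S := by
    have h0 : 0 ≤ α * (Δ - δ) := mul_nonneg hα (by linarith)
    nlinarith [hSsq, hSnn, sq_nonneg (S - α * (Δ - δ))]
  rw [ge_iff_le, show α * (δ - 1) + S = S + α * (δ - 1) by ring]
  have ha : 0 ≤ α * (δ - 1) := mul_nonneg hα (by linarith)
  have key : α ^ 2 * (Δ - 1) ^ 2 + 4 * Δ * (1 - α) ^ 2 ≤ (S + α * (δ - 1)) ^ 2 := by
    nlinarith [hSsq, mul_le_mul_of_nonneg_left hS ha]
  calc Real.sqrt (α ^ 2 * (Δ - 1) ^ 2 + 4 * Δ * (1 - α) ^ 2)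
      ≤ Real.sqrt ((S + α * (δ - 1)) ^ 2) := Real.sqrt_le_sqrt key
    _ = S + α * (δ - 1) := Real.sqrt_sq (by linarith)
end

section
/- Let r ≥ 1 be a real number and α ∈ [0,1]. Then 2αr + √(4r(1−α)²) ≥ α(r+1) + √(α²(r+1)² + 4r(1−2α)), with equality if and only if r = 1 or α = 0 or α = 1. -/
theorem stmt_10 (r α : ℝ) (hr : r ≥ 1) (hα : α ∈ Set.Icc (0 : ℝ) 1) :
    2 * α * r + Real.sqrt (4 * r * (1 - α) ^ 2) ≥
      α * (r + 1) + Real.sqrt (α ^ 2 * (r + 1) ^ 2 + 4 * r * (1 - 2 * α)) ∧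
    (2 * α * r + Real.sqrt (4 * r * (1 - α) ^ 2) =
      α * (r + 1) + Real.sqrt (α ^ 2 * (r + 1) ^ 2 + 4 * r * (1 - 2 * α)) ↔
      r = 1 ∨ α = 0 ∨ α = 1) := by
  obtain ⟨hα0, hα1⟩ := hα
  set s := Real.sqrt r with hs
  have hs1 : 1 ≤ s := by
    rw [hs, show (1:ℝ) = Real.sqrt 1 by simp]
    exact Real.sqrt_le_sqrt hr
  have hsq : s ^ 2 = r := by
    rw [hs, Real.sq_sqrt (by linarith)]
  have hA : 0 ≤ α * (r - 1) := mul_nonneg hα0 (by linarith)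
  have hB : 0 ≤ 2 * (1 - α) * s := by
    apply mul_nonneg (by linarith) (by linarith)
  set A := α * (r - 1) with hAdef
  set B := 2 * (1 - α) * s with hBdef
  have h1 : Real.sqrt (4 * r * (1 - α) ^ 2) = B := by
    rw [show 4 * r * (1 - α) ^ 2 = B ^ 2 by rw [hBdef]; nlinarith]
    exact Real.sqrt_sq hB
  have hinner : α ^ 2 * (r + 1) ^ 2 + 4 * r * (1 - 2 * α) = A ^ 2 + B ^ 2 := by
    rw [hAdef, hBdef]; nlinarith
  have hABnn : 0 ≤ A + B := add_nonneg hA hB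
  have hle : Real.sqrt (A ^ 2 + B ^ 2) ≤ A + B := by
    have h := Real.sqrt_le_sqrt (show A ^ 2 + B ^ 2 ≤ (A + B) ^ 2 by
      nlinarith [mul_nonneg hA hB])
    rwa [Real.sqrt_sq hABnn] at h
  have hLHS : 2 * α * r + B = α * (r + 1) + (A + B) := by
    rw [hAdef]; ring
  constructor
  · rw [h1, hinner, hLHS]
    linarith
  · rw [h1, hinner, hLHS]
    constructor
    · intro h
      have heq : A + B = Real.sqrt (A ^ 2 + B ^ 2) := by linarith
      have h2 : (A + B) ^ 2 = A ^ 2 + B ^ 2 := by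
        rw [heq, Real.sq_sqrt (by positivity)]
      have hAB : A * B = 0 := by nlinarith
      have : α * ((1 - α) * ((r - 1) * s)) = 0 := by
        rw [hAdef, hBdef] at hAB; linarith [hAB]
      rcases mul_eq_zero.1 this with h' | h'
      · right; left; exact h'
      rcases mul_eq_zero.1 h' with h'' | h''
      · right; right; linarith
      rcases mul_eq_zero.1 h'' with h3 | h3
      · left; linarith
      · linarith
    · intro h
      have hAB : A * B = 0 := by
        rcases h with h | h | h
        · rw [hAdef, h]; ring
        · rw [hAdef, h]; ring
        · rw [hBdef, h]; ring
      have : Real.sqrt (A ^ 2 + B ^ 2) = A + B := by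
        rw [show A ^ 2 + B ^ 2 = (A + B) ^ 2 by nlinarith, Real.sqrt_sq hABnn]
      linarith
end

section
/- Let Δ ≥ 1 be a real number. Then αΔ + √(α²Δ² + 4Δ(1−α)²) < α(Δ+1) + √(α²(Δ+1)² + 4Δ(1−2α)) for every real α with 0 < α < 1 or α > 1. -/
theorem stmt_11 (Δ : ℝ) (hΔ : Δ ≥ 1) (α : ℝ) (hα : (0 < α ∧ α < 1) ∨ 1 < α) :
    α * Δ + Real.sqrt (α ^ 2 * Δ ^ 2 + 4 * Δ * (1 - α) ^ 2) <
      α * (Δ + 1) + Real.sqrt (α ^ 2 * (Δ + 1) ^ 2 + 4 * Δ * (1 - 2 * α)) := by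
  have hα0 : 0 < α := by rcases hα with ⟨h, _⟩ | h <;> linarith
  have hαne : α ≠ 1 := by rcases hα with ⟨_, h⟩ | h <;> intro he <;> linarith
  set A := α ^ 2 * Δ ^ 2 + 4 * Δ * (1 - α) ^ 2 with hAdef
  set B := α ^ 2 * (Δ + 1) ^ 2 + 4 * Δ * (1 - 2 * α) with hBdef
  have hkey : (α * (Δ - 1)) ^ 2 < B := by
    have : (α - 1) ^ 2 > 0 := pow_two_pos_of_ne_zero (sub_ne_zero.2 hαne)
    nlinarith [this, hΔ]
  have hBnn : 0 ≤ B := le_trans (by positivity) hkey.le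
  have hsB : α * (Δ - 1) < Real.sqrt B := by
    have h0 : 0 ≤ α * (Δ - 1) := mul_nonneg hα0.le (by linarith)
    exact (Real.lt_sqrt h0).2 hkey
  have hsBnn : 0 ≤ Real.sqrt B := Real.sqrt_nonneg B
  have hsq : Real.sqrt B ^ 2 = B := Real.sq_sqrt hBnn
  have hmain : Real.sqrt A < α + Real.sqrt B := by
    have hpos : 0 < α + Real.sqrt B := by linarith
    rw [show α + Real.sqrt B = Real.sqrt ((α + Real.sqrt B) ^ 2) from
      (Real.sqrt_sq hpos.le).symm]
    apply Real.sqrt_lt_sqrt (by positivity)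
    nlinarith [hsB, hsq, hα0]
  linarith [hmain]
end

section
/- Let Δ ≥ δ ≥ 2 be integers and let α be real with 0 < α < 1. Then α(Δ+δ) + √(α²(Δ−δ)² + 4Δ(1−α)²) > α(Δ+1) + √(α²(Δ+1)² + 4Δ(1−2α)). -/
theorem stmt_12 (Δ δ : ℤ) (h1 : Δ ≥ δ) (h2 : δ ≥ 2) (α : ℝ) (hα : 0 < α) (hα1 : α < 1) :
    α * ((Δ : ℝ) + δ) + Real.sqrt (α ^ 2 * ((Δ : ℝ) - δ) ^ 2 + 4 * Δ * (1 - α) ^ 2) >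
      α * ((Δ : ℝ) + 1) + Real.sqrt (α ^ 2 * ((Δ : ℝ) + 1) ^ 2 + 4 * Δ * (1 - 2 * α)) := by
  have hδ : (2 : ℝ) ≤ (δ : ℝ) := by exact_mod_cast h2
  have hΔδ : (δ : ℝ) ≤ (Δ : ℝ) := by exact_mod_cast h1
  have hΔ : (2 : ℝ) ≤ (Δ : ℝ) := le_trans hδ hΔδ
  set A : ℝ := α ^ 2 * ((Δ : ℝ) - δ) ^ 2 + 4 * Δ * (1 - α) ^ 2 with hAdef
  set B : ℝ := α ^ 2 * ((Δ : ℝ) + 1) ^ 2 + 4 * Δ * (1 - 2 * α) with hBdef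
  have hA : 0 ≤ A := by positivity
  have hBeq : B = α ^ 2 * ((Δ : ℝ) - 1) ^ 2 + 4 * Δ * (1 - α) ^ 2 := by ring
  have hB : 0 ≤ B := by rw [hBeq]; positivity
  have hsA := Real.sq_sqrt hA
  have hsB := Real.sq_sqrt hB
  have hsAnn := Real.sqrt_nonneg A
  have hsBnn := Real.sqrt_nonneg B
  have key : α * ((Δ : ℝ) - δ) < Real.sqrt A := by
    nlinarith [sq_nonneg (Real.sqrt A - α * ((Δ : ℝ) - δ)), sq_nonneg (1 - α),
      mul_nonneg (mul_nonneg hα.le (sub_nonneg.mpr hΔδ)) hsAnn]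
  -- suffices: √B < α(δ-1) + √A
  have hmain : Real.sqrt B < α * ((δ : ℝ) - 1) + Real.sqrt A := by
    nlinarith [mul_pos hα (by linarith : (0:ℝ) < (δ : ℝ) - 1),
      mul_nonneg hsAnn hsBnn,
      mul_lt_mul_of_pos_left key (mul_pos hα (by linarith : (0:ℝ) < (δ : ℝ) - 1))]
  linarith
end

section
/- For a simple graph G on n ≥ 2 vertices with maximum degree Δ and minimum degree δ ≥ 1, and α ∈ [0,1], the spectral radius λ₁(A_α) of A_α = αD + (1−α)A satisfies λ₁(A_α) ≥ (1/2)(α(Δ+1) + √(α²(Δ+1)² + 4Δ(1−2α))), as a consequence of the bound λ₁(A_α) ≥ (1/2)(α(Δ+δ) + √(α²(Δ−δ)² + 4Δ(1−α)²)). -/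
lemma sqrt_shift_aux (a b C : ℝ) (hb : 0 ≤ b) (hab : b ≤ a) (hC : 0 ≤ C) :
    Real.sqrt (a ^ 2 + C) ≤ (a - b) + Real.sqrt (b ^ 2 + C) := by
  have hs : 0 ≤ Real.sqrt (b ^ 2 + C) := Real.sqrt_nonneg _
  have hbs : b ≤ Real.sqrt (b ^ 2 + C) := by
    have h := Real.sqrt_le_sqrt (show b ^ 2 ≤ b ^ 2 + C by linarith)
    rwa [Real.sqrt_sq hb] at h
  rw [Real.sqrt_le_iff]
  refine ⟨by linarith, ?_⟩
  have hsq : Real.sqrt (b ^ 2 + C) ^ 2 = b ^ 2 + C := Real.sq_sqrt (by positivity)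
  nlinarith [mul_nonneg (sub_nonneg.2 hab) (sub_nonneg.2 hbs)]

theorem stmt_14 {V : Type*} [Fintype V] [DecidableEq V] (G : SimpleGraph V)
    [DecidableRel G.Adj] (hn : 2 ≤ Fintype.card V) (hδ : 1 ≤ G.minDegree)
    (α : ℝ) (hα : α ∈ Set.Icc (0 : ℝ) 1)
    (Aα : Matrix V V ℝ)
    (hAα : Aα = α • Matrix.diagonal (fun v => (G.degree v : ℝ)) + (1 - α) • G.adjMatrix ℝ)
    (hH : Aα.IsHermitian) (lam : ℝ) (hlam : lam = ⨆ i, hH.eigenvalues i)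
    (hbound : lam ≥ (1 / 2) * (α * ((G.maxDegree : ℝ) + G.minDegree) +
      Real.sqrt (α ^ 2 * ((G.maxDegree : ℝ) - (G.minDegree : ℝ)) ^ 2 +
        4 * (G.maxDegree : ℝ) * (1 - α) ^ 2))) :
    lam ≥ (1 / 2) * (α * ((G.maxDegree : ℝ) + 1) +
      Real.sqrt (α ^ 2 * ((G.maxDegree : ℝ) + 1) ^ 2 +
        4 * (G.maxDegree : ℝ) * (1 - 2 * α))) := by
  obtain ⟨hα0, hα1⟩ := hα
  have hne : Nonempty V := Fintype.card_pos_iff.mp (by omega)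
  obtain ⟨v⟩ := hne
  have hΔδ : G.minDegree ≤ G.maxDegree :=
    (G.minDegree_le_degree v).trans (G.degree_le_maxDegree v)
  have hd1 : (1 : ℝ) ≤ (G.minDegree : ℝ) := by exact_mod_cast hδ
  have hdD : (G.minDegree : ℝ) ≤ (G.maxDegree : ℝ) := by exact_mod_cast hΔδ
  have hD0 : (0 : ℝ) ≤ (G.maxDegree : ℝ) := by positivity
  set D : ℝ := (G.maxDegree : ℝ) with hD
  set d : ℝ := (G.minDegree : ℝ) with hdd
  refine le_trans ?_ hbound
  rw [show α ^ 2 * (D + 1) ^ 2 + 4 * D * (1 - 2 * α)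
      = (α * (D - 1)) ^ 2 + 4 * D * (1 - α) ^ 2 from by ring,
    show α ^ 2 * (D - d) ^ 2 + 4 * D * (1 - α) ^ 2
      = (α * (D - d)) ^ 2 + 4 * D * (1 - α) ^ 2 from by ring]
  have hkey : Real.sqrt ((α * (D - 1)) ^ 2 + 4 * D * (1 - α) ^ 2)
      ≤ (α * (D - 1) - α * (D - d)) + Real.sqrt ((α * (D - d)) ^ 2 + 4 * D * (1 - α) ^ 2) :=
    sqrt_shift_aux _ _ _ (by nlinarith) (by nlinarith) (by positivity)
  nlinarith [hkey]
end
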